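/- Assume A : V₀ → L²(Q)^{1+d} × L²(Ω)^{1+d} is an isomorphism and (v_T, σ_T) ∈ V_h ⊂ V₀ is the discrete least-squares solution for data (f, g, v₀, σ₀) = A(v,σ). Then the localized residual estimator η_T² summed over elements, η² = ‖∂_t v_T − div_x σ_T − f‖²_Q + ‖∂_t σ_T − ∇_x v_T − g‖²_Q + ‖v_T(0) − v₀‖²_Ω + ‖σ_T(0) − σ₀‖²_Ω, satisfies the two-sided bound η² ≂ ‖(v,σ) − (v_T,σ_T)‖²_V, i.e., the estimator is reliable and efficient with constants depending only on the isomorphism constants of A. -/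

import Mathlib

/-- Let `A : V₀ → Y` be an isomorphism (bounded linear bijection) between
Hilbert spaces — for the wave equation `Y = L²(Q)^{1+d} × L²(Ω)^{1+d}` and
`A(w,χ) = (∂_t w − div_x χ, ∂_t χ − ∇_x w, w(0), χ(0))`.  If `A u = F` (exact solution)
and `u_T ∈ V_h ⊆ V₀` is any discrete function, then the residual error estimator
`η² = ‖A u_T − F‖²_Y` (the sum of the localized element contributions) is reliable and
efficient: `c₁ ‖u − u_T‖² ≤ η² ≤ c₂ ‖u − u_T‖²` with constants depending only on the
isomorphism constants of `A`. -/
theorem stmt17 {V₀ Y : Type*}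
    [NormedAddCommGroup V₀] [InnerProductSpace ℝ V₀] [CompleteSpace V₀]
    [NormedAddCommGroup Y] [InnerProductSpace ℝ Y] [CompleteSpace Y]
    (A : V₀ →L[ℝ] Y) (hA : Function.Bijective A) :
    ∃ c₁ > 0, ∃ c₂ > 0, ∀ (u uT : V₀) (F : Y), A u = F →
      c₁ * ‖u - uT‖ ^ 2 ≤ ‖A uT - F‖ ^ 2 ∧ ‖A uT - F‖ ^ 2 ≤ c₂ * ‖u - uT‖ ^ 2 := by
  have hker : LinearMap.ker (A : V₀ →ₗ[ℝ] Y) = ⊥ := LinearMap.ker_eq_bot.mpr hA.1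
  have hrange : LinearMap.range (A : V₀ →ₗ[ℝ] Y) = ⊤ := LinearMap.range_eq_top.mpr hA.2
  set e := ContinuousLinearEquiv.ofBijective A hker hrange with he
  refine ⟨((‖(e.symm : Y →L[ℝ] V₀)‖ + 1) ^ 2)⁻¹, by positivity, (‖A‖ + 1) ^ 2, by positivity,
    fun u uT F hF => ?_⟩
  have key : A uT - F = A (uT - u) := by rw [← hF, map_sub]
  have h1 : ‖uT - u‖ ≤ (‖(e.symm : Y →L[ℝ] V₀)‖ + 1) * ‖A (uT - u)‖ := by
    calc ‖uT - u‖ = ‖e.symm (A (uT - u))‖ := by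
          rw [show A (uT - u) = e (uT - u) from rfl, e.symm_apply_apply]
      _ ≤ ‖(e.symm : Y →L[ℝ] V₀)‖ * ‖A (uT - u)‖ := (e.symm : Y →L[ℝ] V₀).le_opNorm _
      _ ≤ (‖(e.symm : Y →L[ℝ] V₀)‖ + 1) * ‖A (uT - u)‖ := by
          have := norm_nonneg (A (uT - u)); nlinarith
  have h2 : ‖A (uT - u)‖ ≤ (‖A‖ + 1) * ‖uT - u‖ := by
    have := A.le_opNorm (uT - u)
    have := norm_nonneg (uT - u); nlinarith
  have hn : ‖u - uT‖ = ‖uT - u‖ := norm_sub_rev _ _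
  rw [key, hn]
  constructor
  · rw [inv_mul_le_iff₀ (by positivity)]
    nlinarith [norm_nonneg (uT - u), norm_nonneg (A (uT - u)),
      mul_self_nonneg (‖(e.symm : Y →L[ℝ] V₀)‖ + 1)]
  · nlinarith [norm_nonneg (uT - u), norm_nonneg (A (uT - u)), norm_nonneg A,
      mul_le_mul h2 h2 (norm_nonneg _) (by positivity)]
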